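/- Let T be a bounded linear operator on a Banach space X that is an (m,∞)-isometry. Then T is an (m+1,∞)-isometry. -/

import Mathlib

/-- T is an (m,∞)-isometry: for every x, the maximum of the norms of T^k x over even
k in {0,...,m} equals the maximum over odd k in {0,...,m}. -/
def IsMInfIsometry {𝕜 X : Type*} [RCLike 𝕜] [NormedAddCommGroup X] [NormedSpace 𝕜 X]
    (T : X →L[𝕜] X) (m : ℕ) : Prop :=
  ∀ x : X,
    (((Finset.range (m + 1)).filter fun k => Even k).sup fun k => ‖(T ^ k) x‖₊) =
    (((Finset.range (m + 1)).filter fun k => Odd k).sup fun k => ‖(T ^ k) x‖₊)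

/-!
Shifting the index by one swaps parities: with `g k = f (k + 1)`,
`oddSup f (n + 1) = evenSup g n` and `evenSup f (n + 1) = f 0 ⊔ oddSup g n`.
For `f k = ‖T^k x‖` the shifted sequence `g` is the one of `T x`, so the (m,∞)-isometry
condition at `T x` gives `evenSup f (m + 1) = f 0 ⊔ oddSup f (m + 1)`, and at `x` it gives
`f 0 ≤ evenSup f m = oddSup f m ≤ oddSup f (m + 1)`.
-/

open Finset

section ParitySup

variable {α : Type*} [SemilatticeSup α] [OrderBot α]

def evenSup (f : ℕ → α) (n : ℕ) : α := ((range (n + 1)).filter Even).sup f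

def oddSup (f : ℕ → α) (n : ℕ) : α := ((range (n + 1)).filter Odd).sup f

theorem range_add_one_eq_insert_image (n : ℕ) :
    range (n + 1) = insert 0 ((range n).image (· + 1)) := by
  ext (_ | k) <;> simp

theorem evenSup_add_one (f : ℕ → α) (n : ℕ) :
    evenSup f (n + 1) = f 0 ⊔ oddSup (fun k => f (k + 1)) n := by
  rw [evenSup, range_add_one_eq_insert_image, filter_insert, if_pos Even.zero, sup_insert,
    filter_image, sup_image]
  simp only [Function.comp_def, Nat.even_add_one, Nat.not_even_iff_odd]
  rfl

theorem oddSup_add_one (f : ℕ → α) (n : ℕ) :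
    oddSup f (n + 1) = evenSup (fun k => f (k + 1)) n := by
  rw [oddSup, range_add_one_eq_insert_image, filter_insert, if_neg Nat.not_odd_zero,
    filter_image, sup_image]
  simp only [Function.comp_def, Nat.odd_add_one, Nat.not_odd_iff_even]
  rfl

theorem le_evenSup (f : ℕ → α) (n : ℕ) : f 0 ≤ evenSup f n :=
  le_sup (mem_filter.2 ⟨mem_range.2 n.succ_pos, Even.zero⟩)

theorem oddSup_mono (f : ℕ → α) : Monotone (oddSup f) := fun _ _ h =>
  sup_mono (filter_subset_filter _ (range_subset_range.2 (Nat.succ_le_succ h)))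

theorem evenSup_add_one_eq_oddSup_add_one {f : ℕ → α} {n : ℕ}
    (h : evenSup f n = oddSup f n)
    (h_shift : evenSup (fun k => f (k + 1)) n = oddSup (fun k => f (k + 1)) n) :
    evenSup f (n + 1) = oddSup f (n + 1) := by
  have h_zero : f 0 ≤ oddSup f (n + 1) :=
    calc f 0 ≤ evenSup f n := le_evenSup f n
      _ = oddSup f n := h
      _ ≤ oddSup f (n + 1) := oddSup_mono f n.le_succ
  rw [oddSup_add_one, h_shift] at h_zero ⊢
  rw [evenSup_add_one]
  exact sup_eq_right.2 h_zero

end ParitySup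

namespace IsMInfIsometry

variable {𝕜 X : Type*} [RCLike 𝕜] [NormedAddCommGroup X] [NormedSpace 𝕜 X]

theorem iff_evenSup_eq_oddSup (T : X →L[𝕜] X) (m : ℕ) :
    IsMInfIsometry T m ↔
      ∀ x, evenSup (fun k => ‖(T ^ k) x‖₊) m = oddSup (fun k => ‖(T ^ k) x‖₊) m :=
  Iff.rfl

theorem succ {T : X →L[𝕜] X} {m : ℕ} (hT : IsMInfIsometry T m) : IsMInfIsometry T (m + 1) := by
  rw [iff_evenSup_eq_oddSup] at hT ⊢
  intro x
  have h_shift : (fun k => ‖(T ^ (k + 1)) x‖₊) = fun k => ‖(T ^ k) (T x)‖₊ := by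
    simp only [pow_succ]
    rfl
  exact evenSup_add_one_eq_oddSup_add_one (hT x) (h_shift ▸ hT (T x))

end IsMInfIsometry

theorem stmt_17_general {𝕜 X : Type*} [RCLike 𝕜] [NormedAddCommGroup X] [NormedSpace 𝕜 X]
    (T : X →L[𝕜] X) (m : ℕ) (hT : IsMInfIsometry T m) :
    IsMInfIsometry T (m + 1) :=
  hT.succ

theorem stmt_17 {𝕜 X : Type*} [RCLike 𝕜] [NormedAddCommGroup X] [NormedSpace 𝕜 X]
    [CompleteSpace X] (T : X →L[𝕜] X) (m : ℕ) (hm : 1 ≤ m) (hT : IsMInfIsometry T m) :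
    IsMInfIsometry T (m + 1) :=
  stmt_17_general T m hT
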